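/- Let G = (V, E) be a graph with |V| = n and let 1 ≤ b < n. Assume we have states (A_k, f_k) for 0 ≤ k ≤ n with A_0 = ∅, such that for every 0 ≤ k < n the state (A_{k+1}, f_{k+1}) is a successor of the state (A_k, f_k) with vertex v_{k+1}. Let π be the ordering assigning v_k to the k-th position in the color order, for 1 ≤ k ≤ n. Then π is a b-ordering of G. -/
import Mathlib


/-- `segment` of a position `i` (positions are `1,…,n`): `⌈i/(b+1)⌉`. -/
def bwSegment (b i : ℕ) : ℕ := (i + b) / (b + 1)

/-- `color` of a position `i`: `((i-1) mod (b+1)) + 1`. -/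
def bwColor (b i : ℕ) : ℕ := (i - 1) % (b + 1) + 1

/-- The rank of position `i` in the color order on positions `{1,…,n}`: the number of
positions that are lexicographically smaller with respect to `(color, segment)`. -/
def colOrderRank (n b i : ℕ) : ℕ :=
  ((Finset.Icc 1 n).filter (fun j =>
    bwColor b j < bwColor b i ∨ (bwColor b j = bwColor b i ∧ bwSegment b j < bwSegment b i))).card

/-- `Pos_k`: the set of the first `k` positions in the color order. -/
def PosK (n b k : ℕ) : Finset ℕ :=
  (Finset.Icc 1 n).filter (fun i => colOrderRank n b i < k)

/-- `fbar : V → ℤ` is a bucket extension of `f` (given on `A`). -/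
def IsBucketExtension {V : Type*} (G : SimpleGraph V) (A : Set V) (f fbar : V → ℤ) : Prop :=
  (∀ v ∈ A, fbar v = f v) ∧
  (∀ u v, G.Adj u v → |fbar u - fbar v| ≤ 1) ∧
  (∀ u v, G.Adj u v → u ∈ A → v ∉ A → fbar v ≤ fbar u)

/-- `(A, f)` is a partial bucket function. -/
def IsPartialBucketFunction {V : Type*} (G : SimpleGraph V) (A : Set V) (f : V → ℤ) : Prop :=
  ∃ fbar, IsBucketExtension G A f fbar

/-- `(A, f)` is a state: a partial bucket function whose multiset of values equals the
multiset of segments of the first `|A|` positions in the color order. -/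
def IsState {V : Type*} (G : SimpleGraph V) (n b : ℕ) (A : Finset V) (f : V → ℤ) : Prop :=
  IsPartialBucketFunction G ↑A f ∧
  A.val.map f = (PosK n b A.card).val.map (fun i => (bwSegment b i : ℤ))

/-- `(A', f')` is a successor of the state `(A, f)` with vertex `v`. -/
def IsSuccStateWith {V : Type*} [DecidableEq V] (G : SimpleGraph V) (n b : ℕ)
    (A : Finset V) (f : V → ℤ) (A' : Finset V) (f' : V → ℤ) (v : V) : Prop :=
  IsState G n b A f ∧ IsState G n b A' f' ∧ v ∉ A ∧ A' = insert v A ∧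
  (∀ u ∈ A, f' u = f u) ∧ ¬ ∃ u ∈ A, G.Adj u v ∧ f u < f' v

lemma bw_decomp (b i : ℕ) (hi : 1 ≤ i) :
    i = (bwSegment b i - 1) * (b + 1) + bwColor b i ∧
    1 ≤ bwColor b i ∧ bwColor b i ≤ b + 1 ∧ 1 ≤ bwSegment b i := by
  have h1 : bwSegment b i = (i - 1) / (b + 1) + 1 := by
    have h : i + b = (i - 1) + 1 * (b + 1) := by omega
    unfold bwSegment
    rw [h, Nat.add_mul_div_right _ _ (by omega)]
  have h3 : (i - 1) % (b + 1) < b + 1 := Nat.mod_lt _ (by omega)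
  have h4 := Nat.div_add_mod' (i - 1) (b + 1)
  unfold bwColor
  rw [h1]
  simp only [Nat.add_sub_cancel]
  refine ⟨?_, ?_, ?_, Nat.le_add_left 1 _⟩ <;>
  · generalize hP : (i - 1) / (b + 1) * (b + 1) = P at h4 ⊢
    generalize hm : (i - 1) % (b + 1) = m at h3 h4 ⊢
    clear h1 hP hm
    omega

lemma bw_inj (b i j : ℕ) (hi : 1 ≤ i) (hj : 1 ≤ j)
    (hc : bwColor b i = bwColor b j) (hs : bwSegment b i = bwSegment b j) : i = j := by
  obtain ⟨e1, -⟩ := bw_decomp b i hi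
  obtain ⟨e2, -⟩ := bw_decomp b j hj
  rw [e1, e2, hc, hs]

lemma bwSegment_mono (b : ℕ) {i j : ℕ} (h : i ≤ j) : bwSegment b i ≤ bwSegment b j :=
  Nat.div_le_div_right (by omega)

lemma rank_strictMono {n b i j : ℕ} (hi : i ∈ Finset.Icc 1 n) (hj : j ∈ Finset.Icc 1 n)
    (h : bwColor b i < bwColor b j ∨ (bwColor b i = bwColor b j ∧ bwSegment b i < bwSegment b j)) :
    colOrderRank n b i < colOrderRank n b j := by
  have hsub : ((Finset.Icc 1 n).filter (fun x =>
      bwColor b x < bwColor b i ∨ (bwColor b x = bwColor b i ∧ bwSegment b x < bwSegment b i))) ⊆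
      ((Finset.Icc 1 n).filter (fun x =>
      bwColor b x < bwColor b j ∨ (bwColor b x = bwColor b j ∧ bwSegment b x < bwSegment b j))) := by
    intro x hx
    rw [Finset.mem_filter] at hx ⊢
    exact ⟨hx.1, by omega⟩
  have hmem : i ∈ ((Finset.Icc 1 n).filter (fun x =>
      bwColor b x < bwColor b j ∨ (bwColor b x = bwColor b j ∧ bwSegment b x < bwSegment b j))) :=
    Finset.mem_filter.mpr ⟨hi, h⟩
  have hnmem : i ∉ ((Finset.Icc 1 n).filter (fun x =>
      bwColor b x < bwColor b i ∨ (bwColor b x = bwColor b i ∧ bwSegment b x < bwSegment b i))) := by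
    rw [Finset.mem_filter]
    push_neg
    intro _
    omega
  exact Finset.card_lt_card ((Finset.ssubset_iff_of_subset hsub).mpr ⟨i, hmem, hnmem⟩)

lemma rank_inj {n b i j : ℕ} (hi : i ∈ Finset.Icc 1 n) (hj : j ∈ Finset.Icc 1 n)
    (h : colOrderRank n b i = colOrderRank n b j) : i = j := by
  by_contra hne
  have h1 : 1 ≤ i := (Finset.mem_Icc.mp hi).1
  have h2 : 1 ≤ j := (Finset.mem_Icc.mp hj).1
  have htot : (bwColor b i < bwColor b j ∨ (bwColor b i = bwColor b j ∧ bwSegment b i < bwSegment b j)) ∨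
      (bwColor b j < bwColor b i ∨ (bwColor b j = bwColor b i ∧ bwSegment b j < bwSegment b i)) := by
    by_contra hcon
    push_neg at hcon
    apply hne
    apply bw_inj b i j h1 h2 <;> omega
  rcases htot with ht | ht
  · exact absurd h (Nat.ne_of_lt (rank_strictMono hi hj ht))
  · exact absurd h.symm (Nat.ne_of_lt (rank_strictMono hj hi ht))

lemma PosK_succ {n b k p : ℕ} (hp : p ∈ Finset.Icc 1 n) (hrank : colOrderRank n b p = k) :
    PosK n b (k + 1) = insert p (PosK n b k) ∧ p ∉ PosK n b k := by
  constructor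
  · ext j
    simp only [PosK, Finset.mem_filter, Finset.mem_insert]
    constructor
    · rintro ⟨hj, hlt⟩
      rcases Nat.lt_succ_iff_lt_or_eq.mp hlt with h | h
      · exact Or.inr ⟨hj, h⟩
      · exact Or.inl (rank_inj hj hp (h.trans hrank.symm))
    · rintro (rfl | ⟨hj, hlt⟩)
      · exact ⟨hp, by omega⟩
      · exact ⟨hj, by omega⟩
  · simp only [PosK, Finset.mem_filter, hrank]
    omega

lemma cons_cancel_left {α : Type*} [DecidableEq α] {a b : α} {s : Multiset α}
    (h : a ::ₘ s = b ::ₘ s) : a = b := by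
  by_contra hne
  have hc := congrArg (Multiset.count a) h
  rw [Multiset.count_cons_self, Multiset.count_cons_of_ne hne] at hc
  omega

/-- a successor chain of states from `(∅, ∅)` to a full state yields a
`b`-ordering: the ordering `π` assigning `v_k` to the `k`-th position in color order
(expressed by the rank condition `hπ`) has bandwidth at most `b`. -/
theorem bOrdering_of_stateChain {V : Type*} [Fintype V] [DecidableEq V] (G : SimpleGraph V)
    (n b : ℕ) (hn : Fintype.card V = n) (hb : 1 ≤ b) (hbn : b < n)
    (A : ℕ → Finset V) (f : ℕ → V → ℤ) (v : ℕ → V)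
    (hA0 : A 0 = ∅)
    (hstate : ∀ k ≤ n, IsState G n b (A k) (f k))
    (hchain : ∀ k < n, IsSuccStateWith G n b (A k) (f k) (A (k + 1)) (f (k + 1)) (v (k + 1)))
    (π : V ≃ Fin n)
    (hπ : ∀ k, 1 ≤ k → k ≤ n → colOrderRank n b ((π (v k) : ℕ) + 1) = k - 1) :
    ∀ u w, G.Adj u w → |(((π u : ℕ) + 1 : ℤ)) - (((π w : ℕ) + 1 : ℤ))| ≤ (b : ℤ) := by
  have hn1 : 1 ≤ n := by omega
  -- positions are in `Icc 1 n`
  have hposIcc : ∀ x : V, (π x : ℕ) + 1 ∈ Finset.Icc 1 n := by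
    intro x
    have := (π x).isLt
    simp only [Finset.mem_Icc]
    omega
  -- main invariant along the chain
  have inv : ∀ k, k ≤ n → A k = (Finset.Icc 1 k).image v ∧ (A k).card = k ∧
      ∀ u ∈ A k, f k u = ((bwSegment b ((π u : ℕ) + 1) : ℕ) : ℤ) := by
    intro k
    induction k with
    | zero =>
      intro _
      refine ⟨?_, by simp [hA0], by simp [hA0]⟩
      rw [hA0]
      simp
    | succ k ih =>
      intro hk
      obtain ⟨hAk, hck, hfk⟩ := ih (by omega)
      obtain ⟨-, -, hvnot, hAins, hagree, -⟩ := hchain k (by omega)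
      have hpIcc : (π (v (k + 1)) : ℕ) + 1 ∈ Finset.Icc 1 n := hposIcc _
      have hrank : colOrderRank n b ((π (v (k + 1)) : ℕ) + 1) = k := by
        have := hπ (k + 1) (by omega) (by omega)
        simpa using this
      obtain ⟨hPos, hpnot⟩ := PosK_succ hpIcc hrank
      have hcard' : (A (k + 1)).card = k + 1 := by
        rw [hAins, Finset.card_insert_of_notMem hvnot, hck]
      have hm1 := (hstate k (by omega)).2
      have hm2 := (hstate (k + 1) hk).2
      rw [hck] at hm1
      rw [hcard'] at hm2
      have hLHS : (A (k + 1)).val.map (f (k + 1)) =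
          f (k + 1) (v (k + 1)) ::ₘ (A k).val.map (f k) := by
        rw [hAins, Finset.insert_val_of_notMem hvnot, Multiset.map_cons]
        congr 1
        exact Multiset.map_congr rfl (fun x hx => hagree x (Finset.mem_val.mp hx))
      have hRHS : (PosK n b (k + 1)).val.map (fun i => (bwSegment b i : ℤ)) =
          ((bwSegment b ((π (v (k + 1)) : ℕ) + 1) : ℕ) : ℤ) ::ₘ
            (PosK n b k).val.map (fun i => (bwSegment b i : ℤ)) := by
        rw [hPos, Finset.insert_val_of_notMem hpnot, Multiset.map_cons]
      have hfv' : f (k + 1) (v (k + 1)) = ((bwSegment b ((π (v (k + 1)) : ℕ) + 1) : ℕ) : ℤ) := by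
        apply cons_cancel_left (s := (A k).val.map (f k))
        rw [← hLHS, hm2, hRHS, hm1]
      refine ⟨?_, hcard', ?_⟩
      · have hIcc : Finset.Icc 1 (k + 1) = insert (k + 1) (Finset.Icc 1 k) := by
          ext x
          simp only [Finset.mem_Icc, Finset.mem_insert]
          omega
        rw [hAins, hAk, hIcc, Finset.image_insert]
      · intro u hu
        rw [hAins, Finset.mem_insert] at hu
        rcases hu with rfl | hu
        · exact hfv'
        · rw [hagree u hu]
          exact hfk u hu
  obtain ⟨hAn, hcn, hfn⟩ := inv n le_rfl
  have hAnuniv : A n = Finset.univ := Finset.eq_univ_of_card _ (by rw [hcn, hn])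
  have hfnall : ∀ u : V, f n u = ((bwSegment b ((π u : ℕ) + 1) : ℕ) : ℤ) := by
    intro u
    exact hfn u (by rw [hAnuniv]; exact Finset.mem_univ u)
  -- segments of adjacent vertices differ by at most 1
  obtain ⟨⟨fbar, hfb1, hfb2, hfb3⟩, -⟩ := hstate n le_rfl
  have hFedge : ∀ u w : V, G.Adj u w → |f n u - f n w| ≤ 1 := by
    intro u w huw
    have h1 : fbar u = f n u := hfb1 u (by simp [hAnuniv])
    have h2 : fbar w = f n w := hfb1 w (by simp [hAnuniv])
    rw [← h1, ← h2]
    exact hfb2 u w huw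
  -- every vertex is some v j
  have hindex : ∀ u : V, ∃ j, 1 ≤ j ∧ j ≤ n ∧ v j = u := by
    intro u
    have hu : u ∈ A n := by rw [hAnuniv]; exact Finset.mem_univ u
    rw [hAn] at hu
    obtain ⟨j, hj, hvj⟩ := Finset.mem_image.mp hu
    rw [Finset.mem_Icc] at hj
    exact ⟨j, hj.1, hj.2, hvj⟩
  -- the key ordered case
  have main : ∀ u w : V, G.Adj u w → (π u : ℕ) < (π w : ℕ) → (π w : ℕ) - (π u : ℕ) ≤ b := by
    intro u w huw hlt
    obtain ⟨d1, hci1, hci2, hsi1⟩ := bw_decomp b ((π u : ℕ) + 1) (by omega)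
    obtain ⟨d2, hci1', hci2', hsi1'⟩ := bw_decomp b ((π w : ℕ) + 1) (by omega)
    have hmono : bwSegment b ((π u : ℕ) + 1) ≤ bwSegment b ((π w : ℕ) + 1) :=
      bwSegment_mono b (by omega)
    have hedge := hFedge u w huw
    rw [hfnall u, hfnall w, abs_le] at hedge
    have hseg : bwSegment b ((π w : ℕ) + 1) ≤ bwSegment b ((π u : ℕ) + 1) + 1 := by omega
    by_cases hbad : bwSegment b ((π w : ℕ) + 1) = bwSegment b ((π u : ℕ) + 1) + 1 ∧
        bwColor b ((π u : ℕ) + 1) ≤ bwColor b ((π w : ℕ) + 1)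
    · exfalso
      have hL : bwColor b ((π u : ℕ) + 1) < bwColor b ((π w : ℕ) + 1) ∨
          (bwColor b ((π u : ℕ) + 1) = bwColor b ((π w : ℕ) + 1) ∧
            bwSegment b ((π u : ℕ) + 1) < bwSegment b ((π w : ℕ) + 1)) := by omega
      obtain ⟨ju, hju1, hju2, hvu⟩ := hindex u
      obtain ⟨jw, hjw1, hjw2, hvw⟩ := hindex w
      have hru : colOrderRank n b ((π u : ℕ) + 1) = ju - 1 := by
        have := hπ ju hju1 hju2
        rw [hvu] at this
        exact this
      have hrw : colOrderRank n b ((π w : ℕ) + 1) = jw - 1 := by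
        have := hπ jw hjw1 hjw2
        rw [hvw] at this
        exact this
      have hrlt := rank_strictMono (hposIcc u) (hposIcc w) hL
      have hjlt : ju < jw := by omega
      obtain ⟨-, -, -, -, -, hsucc⟩ := hchain (jw - 1) (by omega)
      apply hsucc
      have hk1 : jw - 1 + 1 = jw := by omega
      obtain ⟨hAe, -, hfe⟩ := inv (jw - 1) (by omega)
      have huA : u ∈ A (jw - 1) := by
        rw [hAe, Finset.mem_image]
        exact ⟨ju, Finset.mem_Icc.mpr ⟨hju1, by omega⟩, hvu⟩
      refine ⟨u, huA, ?_, ?_⟩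
      · rw [hk1, hvw]
        exact huw
      · have h1 : f (jw - 1) u = ((bwSegment b ((π u : ℕ) + 1) : ℕ) : ℤ) := hfe u huA
        have h2 : f (jw - 1 + 1) (v (jw - 1 + 1)) = ((bwSegment b ((π w : ℕ) + 1) : ℕ) : ℤ) := by
          rw [hk1, hvw]
          obtain ⟨hAe', -, hfe'⟩ := inv jw hjw2
          have hwA : w ∈ A jw := by
            rw [hAe', Finset.mem_image]
            exact ⟨jw, Finset.mem_Icc.mpr ⟨hjw1, le_rfl⟩, hvw⟩
          exact hfe' w hwA
        rw [h1, h2]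
        exact_mod_cast by omega
    · -- bandwidth arithmetic
      push_neg at hbad
      rcases Nat.lt_or_ge (bwSegment b ((π w : ℕ) + 1)) (bwSegment b ((π u : ℕ) + 1) + 1) with hs | hs
      · -- equal segments
        have hseq : bwSegment b ((π w : ℕ) + 1) = bwSegment b ((π u : ℕ) + 1) := by omega
        rw [hseq] at d2
        omega
      · -- segment increases by one, color decreases
        have hseq : bwSegment b ((π w : ℕ) + 1) = bwSegment b ((π u : ℕ) + 1) + 1 := by omega
        have hcol := hbad hseq
        rw [hseq] at d2
        have hmul : (bwSegment b ((π u : ℕ) + 1) + 1 - 1) * (b + 1) =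
            (bwSegment b ((π u : ℕ) + 1) - 1) * (b + 1) + (b + 1) := by
          have h5 : bwSegment b ((π u : ℕ) + 1) + 1 - 1 =
              (bwSegment b ((π u : ℕ) + 1) - 1) + 1 := by omega
          rw [h5, Nat.add_mul, Nat.one_mul]
        have hd2' : (π w : ℕ) + 1 =
            (bwSegment b ((π u : ℕ) + 1) - 1) * (b + 1) + (b + 1) + bwColor b ((π w : ℕ) + 1) :=
          d2.trans (by rw [hmul])
        generalize hQ : (bwSegment b ((π u : ℕ) + 1) - 1) * (b + 1) = Q at d1 hd2'
        omega
  -- assemble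
  intro u w huw
  rcases Nat.lt_trichotomy (π u : ℕ) (π w : ℕ) with h | h | h
  · have hm := main u w huw h
    rw [abs_le]
    constructor <;> push_cast <;> omega
  · exact absurd (π.injective (Fin.ext h)) (G.ne_of_adj huw)
  · have hm := main w u huw.symm h
    rw [abs_le]
    constructor <;> push_cast <;> omega
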